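/- arXiv:2408.01186 — 5 statements merged into one kernel-verified Lean document; each statement's English description precedes it below -/
import Mathlib

section
/- Let n ≥ 1 and 0 < t₁ < t₂ < ... < tₙ be distinct positive reals, and let P(x) = ∏_{k=1}^n (x² − t_k²). Then for any r > tₙ there exist even polynomials Q and R, both nonnegative on ℝ, such that P(x) = (x² − r²)·Q(x) + R(x) for all real x. -/
/-!
Put `w = x² - r²` and `a_k = r² - t_k² ≥ 0`; it suffices to write `F(w) = ∏ (w + a_k)` as
`w q(w) + R(w)` with `q, R ≥ 0` on `ℝ`. Sort the `a_k` increasingly and let `R` be the product of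
`(w - √a √b)²` over consecutive pairs `(a, b)`, times the last `a_k` if `n` is odd. Then
`R(0) = F(0)`, and since `(a + w)(b + w) = (w - √a √b)² + (√a + √b)² w`, induction over the pairs
shows that `F - R` has the sign of `w`; sortedness controls the one pair that can be negative.
Hence `q = (F - R) / w` is nonnegative away from `0`, and at `0` by continuity.
-/

open Polynomial

lemma Continuous.nonneg_of_forall_ne {f : ℝ → ℝ} (hf : Continuous f) {x₀ : ℝ}
    (h : ∀ x ≠ x₀, 0 ≤ f x) (x : ℝ) : 0 ≤ f x := by
  have : closure {x₀}ᶜ ⊆ {x | 0 ≤ f x} := closure_minimal h (isClosed_le continuous_const hf)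
  exact this (by simp)

lemma add_mul_add_eq_sub_sq_add {a b : ℝ} (ha : 0 ≤ a) (hb : 0 ≤ b) (w : ℝ) :
    (a + w) * (b + w) = (w - √a * √b) ^ 2 + (√a + √b) ^ 2 * w := by
  linear_combination (-(b + w)) * Real.sq_sqrt ha - (√a ^ 2 + w) * Real.sq_sqrt hb

noncomputable def pairedSquares : List ℝ → ℝ[X]
  | [] => 1
  | [a] => C a
  | a :: b :: l => (X - C (√a * √b)) ^ 2 * pairedSquares l

lemma pairedSquares_eval_nonneg :
    ∀ {l : List ℝ}, (∀ a ∈ l, 0 ≤ a) → ∀ w, 0 ≤ (pairedSquares l).eval w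
  | [], _, _ => by simp [pairedSquares]
  | [a], hl, _ => by simpa [pairedSquares] using hl
  | a :: b :: l, hl, w => by
    have ih := pairedSquares_eval_nonneg (l := l) (fun x hx => hl x (by simp [hx])) w
    rw [pairedSquares, eval_mul]
    exact mul_nonneg (by simp only [eval_pow]; positivity) ih

lemma pairedSquares_eval_zero :
    ∀ {l : List ℝ}, (∀ a ∈ l, 0 ≤ a) → (pairedSquares l).eval 0 = l.prod
  | [], _ => by simp [pairedSquares]
  | [a], _ => by simp [pairedSquares]
  | a :: b :: l, hl => by
    have ih := pairedSquares_eval_zero (l := l) (fun x hx => hl x (by simp [hx]))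
    simp only [pairedSquares, eval_mul, eval_pow, eval_sub, eval_X, eval_C, List.prod_cons, ih]
    linear_combination (l.prod * b) * Real.sq_sqrt (hl a (by simp)) +
      (l.prod * √a ^ 2) * Real.sq_sqrt (hl b (by simp))

lemma mul_sub_pairedSquares_nonneg :
    ∀ {l : List ℝ}, l.Pairwise (· ≤ ·) → (∀ a ∈ l, 0 ≤ a) →
      ∀ w, 0 ≤ w * ((l.map (· + w)).prod - (pairedSquares l).eval w)
  | [], _, _, _ => by simp [pairedSquares]
  | [a], _, _, w => by simpa [pairedSquares] using mul_self_nonneg w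
  | a :: b :: l, hsorted, hl, w => by
    obtain ⟨⟨hab, -⟩, hbl, hsorted⟩ : (a ≤ b ∧ ∀ x ∈ l, a ≤ x) ∧ (∀ x ∈ l, b ≤ x) ∧
        l.Pairwise (· ≤ ·) := by simpa using hsorted
    obtain ⟨ha, hb, hl⟩ : 0 ≤ a ∧ 0 ≤ b ∧ ∀ x ∈ l, 0 ≤ x := by simpa using hl
    have ih := mul_sub_pairedSquares_nonneg hsorted hl w
    have hR := pairedSquares_eval_nonneg hl w
    simp only [pairedSquares, eval_mul, eval_pow, eval_sub, eval_X, eval_C, List.map_cons,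
      List.prod_cons]
    set F := (l.map (· + w)).prod
    set R := (pairedSquares l).eval w
    have hpair : (w - √a * √b) ^ 2 = (a + w) * (b + w) - (√a + √b) ^ 2 * w := by
      rw [add_mul_add_eq_sub_sq_add ha hb w]; ring
    rcases le_or_gt 0 ((a + w) * (b + w)) with hP | hP
    · calc 0 ≤ (a + w) * (b + w) * (w * (F - R)) + (√a + √b) ^ 2 * w ^ 2 * R := by positivity
        _ = _ := by rw [hpair]; ring
    · -- then `-b < w < -a`, and all factors of `F` are positive
      have hbw : 0 < b + w := by nlinarith
      have hw : w < 0 := by nlinarith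
      have hF : 0 ≤ F := List.prod_nonneg fun y hy => by
        obtain ⟨x, hx, rfl⟩ := List.mem_map.1 hy
        linarith [hbl x hx]
      calc 0 ≤ w * ((a + w) * (b + w)) * F + -w * ((w - √a * √b) ^ 2 * R) :=
            add_nonneg (mul_nonneg (mul_nonneg_of_nonpos_of_nonpos hw.le hP.le) hF)
              (mul_nonneg (by linarith) (by positivity))
        _ = _ := by ring

theorem Multiset.exists_prod_X_add_C_eq_X_mul_add (s : Multiset ℝ) (hs : ∀ a ∈ s, 0 ≤ a) :
    ∃ q R : ℝ[X], (∀ w, 0 ≤ q.eval w) ∧ (∀ w, 0 ≤ R.eval w) ∧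
      (s.map (fun a => X + C a)).prod = X * q + R := by
  set l := s.sort (· ≤ ·)
  have hls : (l : Multiset ℝ) = s := s.sort_eq _
  have hl : ∀ a ∈ l, 0 ≤ a := fun a ha => hs a (hls ▸ Multiset.mem_coe.2 ha)
  set F := (s.map (fun a => X + C a)).prod
  have hF : ∀ w, F.eval w = (l.map (· + w)).prod := by
    intro w
    rw [eval_multiset_prod, ← hls, Multiset.map_coe, Multiset.map_coe, Multiset.prod_coe,
      List.map_map]
    simp [Function.comp_def, add_comm]
  set R := pairedSquares l
  set q := (F - R).divX
  have hFR : F = X * q + R := by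
    have hcoeff : (F - R).coeff 0 = 0 := by
      rw [coeff_zero_eq_eval_zero, eval_sub, hF, pairedSquares_eval_zero hl]
      simp
    linear_combination (X_mul_divX_add (F - R)).symm + C_eq_zero.2 hcoeff
  refine ⟨q, R, q.continuous.nonneg_of_forall_ne (x₀ := 0) fun w hw => ?_,
    pairedSquares_eval_nonneg hl, hFR⟩
  have hsign := mul_sub_pairedSquares_nonneg (s.pairwise_sort _) hl w
  rw [← hF, hFR, eval_add, eval_mul, eval_X, add_sub_cancel_right, ← mul_assoc] at hsign
  exact (mul_nonneg_iff_of_pos_left (mul_self_pos.2 hw)).mp hsign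

theorem polynomial_decomposition_general (n : ℕ) (t : Fin n → ℝ)
    (ht0 : ∀ k, 0 < t k)
    (r : ℝ) (hr : ∀ k, t k < r) :
    ∃ Q R : Polynomial ℝ,
      (∀ x : ℝ, Q.eval (-x) = Q.eval x) ∧ (∀ x : ℝ, R.eval (-x) = R.eval x) ∧
      (∀ x : ℝ, 0 ≤ Q.eval x) ∧ (∀ x : ℝ, 0 ≤ R.eval x) ∧
      (∀ x : ℝ, (∏ k, (x ^ 2 - t k ^ 2)) = (x ^ 2 - r ^ 2) * Q.eval x + R.eval x) := by
  obtain ⟨q, R, hq, hR, hFR⟩ := Multiset.exists_prod_X_add_C_eq_X_mul_add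
    (Finset.univ.val.map fun k => r ^ 2 - t k ^ 2)
    (Multiset.forall_mem_map_iff.2 fun k _ => by nlinarith [ht0 k, hr k])
  refine ⟨q.comp (X ^ 2 - C (r ^ 2)), R.comp (X ^ 2 - C (r ^ 2)), by simp, by simp,
    fun x => by simpa using hq _, fun x => by simpa using hR _, fun x => ?_⟩
  have hx := congrArg (eval (x ^ 2 - r ^ 2)) hFR
  rw [eval_multiset_prod, Multiset.map_map, Multiset.map_map,
    ← Finset.prod_eq_multiset_prod] at hx
  simpa using hx

/-- polynomial decomposition `∏ (x² − t_k²) = (x² − r²) Q(x) + R(x)`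
with `Q, R` even and nonnegative on `ℝ`. -/
theorem polynomial_decomposition (n : ℕ) (hn : 1 ≤ n) (t : Fin n → ℝ)
    (ht0 : ∀ k, 0 < t k) (htmono : StrictMono t)
    (r : ℝ) (hr : ∀ k, t k < r) :
    ∃ Q R : Polynomial ℝ,
      (∀ x : ℝ, Q.eval (-x) = Q.eval x) ∧ (∀ x : ℝ, R.eval (-x) = R.eval x) ∧
      (∀ x : ℝ, 0 ≤ Q.eval x) ∧ (∀ x : ℝ, 0 ≤ R.eval x) ∧
      (∀ x : ℝ, (∏ k, (x ^ 2 - t k ^ 2)) = (x ^ 2 - r ^ 2) * Q.eval x + R.eval x) :=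
  polynomial_decomposition_general n t ht0 r hr
end

section
/- Let n ≥ 1 and 0 < t₁ < ... < tₙ < r. Then there exist even polynomials Q, R nonnegative on ℝ with ∏_{k=1}^n (x² − t_k²) = (x² − r²)Q(x) + R(x), where deg Q = 2n−2 and deg R = 2n−2 if n is odd, and deg Q = 2n−4 and deg R = 2n if n is even. -/
/-!
Substitute `y = x ^ 2`: with `uₖ = tₖ ^ 2 < d = r ^ 2` it suffices to write
`∏ (y - uₖ) = (y - d) q + ρ` with `q, ρ ≥ 0` on all of `ℝ`. The roots are added two at a time,
the largest last. For `a ≤ b < d` there are `c > 0` and `e` with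
`(y - a)(y - b) = (y - d) c + (y - e) ^ 2`, hence
`(y - a)(y - b) P = (y - d) ((y - a)(y - b) q + c ρ) + (y - e) ^ 2 ρ`.
The new quotient is clearly nonnegative off `(a, b)`; on `(a, b)` the old product `P` is
nonnegative, i.e. `(d - y) q ≤ ρ`, and `c ≥ b - a` makes `c ρ` absorb the negative term.
Positive leading coefficients keep the degrees from cancelling, so `ρ` gains two degrees per
step and `q` reaches degree `max (deg q + 2) (deg ρ)`.
-/

open Polynomial

theorem natDegree_add_eq_max_and_leadingCoeff_pos {R : Type*} [Semiring R] [PartialOrder R]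
    [IsOrderedCancelAddMonoid R] {p q : R[X]}
    (hp : 0 < p.leadingCoeff) (hq : 0 < q.leadingCoeff) :
    (p + q).natDegree = max p.natDegree q.natDegree ∧ 0 < (p + q).leadingCoeff := by
  rcases lt_trichotomy p.natDegree q.natDegree with h | h | h
  · rw [natDegree_add_eq_right_of_natDegree_lt h,
      leadingCoeff_add_of_degree_lt (degree_lt_degree h)]
    exact ⟨(max_eq_right h.le).symm, hq⟩
  · have hlc : p.leadingCoeff + q.leadingCoeff ≠ 0 := (add_pos hp hq).ne'
    have hdeg : p.degree = q.degree := by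
      rw [degree_eq_natDegree (leadingCoeff_ne_zero.mp hp.ne'),
        degree_eq_natDegree (leadingCoeff_ne_zero.mp hq.ne'), h]
    rw [leadingCoeff_add_of_degree_eq hdeg hlc, natDegree_eq_of_degree_eq
      ((degree_add_eq_of_leadingCoeff_add_ne_zero hlc).trans (by rw [hdeg, max_self])), h, max_self]
    exact ⟨rfl, add_pos hp hq⟩
  · rw [natDegree_add_eq_left_of_natDegree_lt h,
      leadingCoeff_add_of_degree_lt' (degree_lt_degree h)]
    exact ⟨(max_eq_left h.le).symm, hp⟩

/-- `e` is chosen so that `(X - a) * (X - b) - (X - e) ^ 2`, which has degree one, vanishes at `d`;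
the root `e > d` makes `c = (√(d - a) + √(d - b)) ^ 2`. -/
theorem exists_X_sub_C_mul_X_sub_C_eq {a b d : ℝ} (hab : a ≤ b) (hbd : b < d) :
    ∃ c e : ℝ, 0 < c ∧ b - a ≤ c ∧
      (X - C a) * (X - C b) = (X - C d) * C c + (X - C e) ^ 2 := by
  set s := √((d - a) * (d - b))
  have hs : s ^ 2 = (d - a) * (d - b) := Real.sq_sqrt (by nlinarith)
  have hs0 : 0 ≤ s := Real.sqrt_nonneg _
  refine ⟨2 * d - a - b + 2 * s, d + s, by linarith, by linarith, ?_⟩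
  apply Polynomial.funext
  intro x
  simp only [eval_mul, eval_add, eval_sub, eval_pow, eval_X, eval_C]
  linear_combination -hs

theorem mul_pair_quot_nonneg {a b c d y q ρ : ℝ} (hab : a ≤ b) (hbd : b ≤ d) (hc : b - a ≤ c)
    (hq : 0 ≤ q) (hρ : 0 ≤ ρ) (hP : a < y → y < b → 0 ≤ (y - d) * q + ρ) :
    0 ≤ (y - a) * (y - b) * q + c * ρ := by
  have hc0 : 0 ≤ c := by linarith
  rcases le_or_gt y a with hya | hay
  · have : 0 ≤ (y - a) * (y - b) := mul_nonneg_of_nonpos_of_nonpos (by linarith) (by linarith)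
    positivity
  rcases le_or_gt b y with hby | hyb
  · have : 0 ≤ (y - a) * (y - b) := mul_nonneg (by linarith) (by linarith)
    positivity
  have hρq : (d - y) * q ≤ ρ := by linarith [hP hay hyb]
  have hab' : (y - a) * (b - y) ≤ c * (d - y) := by nlinarith
  nlinarith [mul_le_mul_of_nonneg_right hab' hq, mul_le_mul_of_nonneg_left hρq hc0]

structure IsNonnegDecomposition (d : ℝ) (P q ρ : ℝ[X]) : Prop where
  eq : P = (X - C d) * q + ρ
  quot_nonneg : ∀ y, 0 ≤ q.eval y
  rem_nonneg : ∀ y, 0 ≤ ρ.eval y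
  quot_leadingCoeff_pos : 0 < q.leadingCoeff
  rem_leadingCoeff_pos : 0 < ρ.leadingCoeff

theorem IsNonnegDecomposition.mul_pair {a b d : ℝ} {P q ρ : ℝ[X]}
    (h : IsNonnegDecomposition d P q ρ) (hab : a ≤ b) (hbd : b < d)
    (hP : ∀ y, a < y → 0 ≤ P.eval y) :
    ∃ q' ρ', IsNonnegDecomposition d ((X - C a) * (X - C b) * P) q' ρ' ∧
      q'.natDegree = max (q.natDegree + 2) ρ.natDegree ∧ ρ'.natDegree = ρ.natDegree + 2 := by
  obtain ⟨c, e, hc0, hc, hpair⟩ := exists_X_sub_C_mul_X_sub_C_eq hab hbd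
  have hab_monic : ((X - C a) * (X - C b)).Monic := (monic_X_sub_C a).mul (monic_X_sub_C b)
  have he_monic : ((X - C e) ^ 2).Monic := (monic_X_sub_C e).pow 2
  have hq0 : q ≠ 0 := leadingCoeff_ne_zero.mp h.quot_leadingCoeff_pos.ne'
  have hρ0 : ρ ≠ 0 := leadingCoeff_ne_zero.mp h.rem_leadingCoeff_pos.ne'
  obtain ⟨hdeg, hlc⟩ := natDegree_add_eq_max_and_leadingCoeff_pos
    (p := (X - C a) * (X - C b) * q) (q := C c * ρ)
    (by rw [leadingCoeff_monic_mul hab_monic]; exact h.quot_leadingCoeff_pos)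
    (by rw [leadingCoeff_mul, leadingCoeff_C]; exact mul_pos hc0 h.rem_leadingCoeff_pos)
  refine ⟨_, (X - C e) ^ 2 * ρ, ⟨?_, fun y => ?_, fun y => ?_, hlc, ?_⟩, ?_, ?_⟩
  · rw [h.eq]
    linear_combination ρ * hpair
  · simp only [eval_add, eval_mul, eval_sub, eval_X, eval_C]
    refine mul_pair_quot_nonneg hab hbd.le hc (h.quot_nonneg y) (h.rem_nonneg y) fun hay _ => ?_
    simpa [h.eq] using hP y hay
  · simpa only [eval_mul, eval_pow] using mul_nonneg (sq_nonneg _) (h.rem_nonneg y)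
  · rw [leadingCoeff_monic_mul he_monic]
    exact h.rem_leadingCoeff_pos
  · rw [hdeg, hab_monic.natDegree_mul' hq0, natDegree_C_mul hc0.ne',
      (monic_X_sub_C a).natDegree_mul (monic_X_sub_C b), natDegree_X_sub_C, natDegree_X_sub_C,
      add_comm]
  · rw [he_monic.natDegree_mul' hρ0, natDegree_pow, natDegree_X_sub_C, add_comm]

theorem exists_isNonnegDecomposition_prod {d : ℝ} :
    ∀ l : List ℝ, l ≠ [] → l.Pairwise (· ≥ ·) → (∀ u ∈ l, u < d) →
      ∃ q ρ, IsNonnegDecomposition d (l.map (X - C ·)).prod q ρ ∧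
        q.natDegree = 2 * ((l.length - 1) / 2) ∧ ρ.natDegree = 2 * (l.length / 2)
  | [a], _, _, hd => by
    have had : a < d := hd a (by simp)
    refine ⟨1, C (d - a), ⟨by simp, by simp, by simp [had.le], by simp, ?_⟩, by simp, by simp⟩
    rwa [leadingCoeff_C, sub_pos]
  | [b, a], _, hl, hd => by
    obtain ⟨c, e, hc0, -, hpair⟩ :=
      exists_X_sub_C_mul_X_sub_C_eq (by simpa using hl) (hd b (by simp))
    refine ⟨C c, (X - C e) ^ 2,
      ⟨?_, by simp [hc0.le], fun y => by simp [sq_nonneg], by simpa, by simp⟩, by simp, by simp⟩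
    simp only [List.map_cons, List.map_nil, List.prod_cons, List.prod_nil, mul_one]
    linear_combination hpair
  | b :: a :: u :: l, _, hl, hd => by
    obtain ⟨hb, ha, hl⟩ : (∀ v ∈ a :: u :: l, v ≤ b) ∧ (∀ v ∈ u :: l, v ≤ a) ∧
        (u :: l).Pairwise (· ≥ ·) := by
      simpa [List.pairwise_cons] using hl
    obtain ⟨q, ρ, h, hq, hρ⟩ := exists_isNonnegDecomposition_prod (u :: l) (List.cons_ne_nil _ _)
      hl fun v hv => hd v (by simp_all)
    have hP : ∀ y, a < y → 0 ≤ ((u :: l).map (X - C ·)).prod.eval y := fun y hy => by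
      rw [eval_list_prod, List.map_map]
      refine List.prod_nonneg fun z hz => ?_
      obtain ⟨v, hv, rfl⟩ := List.mem_map.mp hz
      simpa using (ha v hv).trans hy.le
    obtain ⟨q', ρ', h', hq', hρ'⟩ := h.mul_pair (hb a (by simp)) (hd b (by simp)) hP
    refine ⟨q', ρ', ?_, ?_, ?_⟩
    · convert h' using 1
      simp only [List.map_cons, List.prod_cons]
      ring
    · simp only [hq', hq, hρ, List.length_cons]
      omega
    · simp only [hρ', hρ, List.length_cons]
      omega

/-- polynomial decomposition with the degrees of `Q` and `R` specified:
`deg Q = 2n−2`, `deg R = 2n−2` for odd `n`; `deg Q = 2n−4`, `deg R = 2n` for even `n`. -/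
theorem polynomial_decomposition_degrees (n : ℕ) (hn : 1 ≤ n) (t : Fin n → ℝ)
    (ht0 : ∀ k, 0 < t k) (htmono : StrictMono t)
    (r : ℝ) (hr : ∀ k, t k < r) :
    ∃ Q R : Polynomial ℝ,
      (∀ x : ℝ, Q.eval (-x) = Q.eval x) ∧ (∀ x : ℝ, R.eval (-x) = R.eval x) ∧
      (∀ x : ℝ, 0 ≤ Q.eval x) ∧ (∀ x : ℝ, 0 ≤ R.eval x) ∧
      (∀ x : ℝ, (∏ k, (x ^ 2 - t k ^ 2)) = (x ^ 2 - r ^ 2) * Q.eval x + R.eval x) ∧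
      Q.natDegree = (if Odd n then 2 * n - 2 else 2 * n - 4) ∧
      R.natDegree = (if Odd n then 2 * n - 2 else 2 * n) := by
  set l := (List.ofFn fun k => t k ^ 2).reverse
  have hl : l.Pairwise (· ≥ ·) := by
    simp only [l, List.pairwise_reverse, List.pairwise_ofFn]
    exact fun i j hij => pow_le_pow_left₀ (ht0 i).le (htmono hij).le 2
  have hlr : ∀ u ∈ l, u < r ^ 2 := by
    simp only [l, List.mem_reverse, List.mem_ofFn, forall_exists_index]
    rintro _ k rfl
    exact pow_lt_pow_left₀ (hr k) (ht0 k).le two_ne_zero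
  have hlen : l.length = n := by simp [l]
  obtain ⟨q, ρ, h, hq, hρ⟩ := exists_isNonnegDecomposition_prod l
    (List.ne_nil_of_length_pos (hlen ▸ hn)) hl hlr
  rw [hlen] at hq hρ
  refine ⟨q.comp (X ^ 2), ρ.comp (X ^ 2), by simp [eval_comp], by simp [eval_comp],
    fun x => by simpa [eval_comp] using h.quot_nonneg _,
    fun x => by simpa [eval_comp] using h.rem_nonneg _, fun x => ?_, ?_, ?_⟩
  · simpa [l, eval_comp, eval_list_prod, List.map_reverse, List.prod_reverse, List.prod_ofFn,
      eval_prod] using congrArg (eval (x ^ 2)) h.eq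
  all_goals
    simp only [natDegree_comp, natDegree_X_pow, hq, hρ, Nat.odd_iff]
    split_ifs <;> omega
end

section
/- Let E : ℂ → ℂ be entire with |E(conj z)̄| < |E(z)| for all z in the open upper half-plane (Hermite–Biehler). Define A(z) = (E(z) + E*(z))/2 and B(z) = i(E(z) − E*(z))/2, where E*(z) = conj(E(conj z)). Then A and B are real entire functions (real on ℝ), and every zero of A and every zero of B is real. -/
/-- The conjugate entire function `E*(z) = conj (E (conj z))`. -/
noncomputable def conjFn (E : ℂ → ℂ) : ℂ → ℂ :=
  fun z => (starRingEnd ℂ) (E ((starRingEnd ℂ) z))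

/-- `A = (E + E*)/2`. -/
noncomputable def Afn (E : ℂ → ℂ) : ℂ → ℂ := fun z => (E z + conjFn E z) / 2

/-- `B = i(E − E*)/2`. -/
noncomputable def Bfn (E : ℂ → ℂ) : ℂ → ℂ := fun z => Complex.I * (E z - conjFn E z) / 2

/-!
On the real axis `E*` is the conjugate of `E`, so `A = Re E` and `B = -Im E` there. A zero of `A`
(resp. `B`) is a point where `E* = -E` (resp. `E* = E`), so `|E*| = |E|` there. The
Hermite–Biehler inequality rules this out in the upper half-plane, and, applied at `conj z`, also
in the lower one.
-/

open ComplexConjugate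

lemma Differentiable.conjFn {E : ℂ → ℂ} (hE : Differentiable ℂ E) :
    Differentiable ℂ (conjFn E) := fun z => by
  have h := (hE (conj z)).conj_conj
  rw [Complex.conj_conj] at h
  exact h

lemma conjFn_ofReal (E : ℂ → ℂ) (x : ℝ) : conjFn E x = conj (E x) := by
  simp [conjFn]

lemma norm_conjFn (E : ℂ → ℂ) (z : ℂ) : ‖conjFn E z‖ = ‖E (conj z)‖ := by
  simp [conjFn]

lemma im_eq_zero_of_norm_conjFn_eq {E : ℂ → ℂ}
    (hHB : ∀ z : ℂ, 0 < z.im → ‖conjFn E z‖ < ‖E z‖) {z : ℂ}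
    (hz : ‖conjFn E z‖ = ‖E z‖) : z.im = 0 := by
  rcases lt_trichotomy z.im 0 with hneg | hzero | hpos
  · have hlt := hHB (conj z) (by simpa using hneg)
    rw [norm_conjFn, Complex.conj_conj, ← norm_conjFn, hz] at hlt
    exact absurd hlt (lt_irrefl _)
  · exact hzero
  · exact absurd hz (hHB z hpos).ne

lemma Afn_ofReal_im (E : ℂ → ℂ) (x : ℝ) : (Afn E x).im = 0 := by
  simp [Afn, conjFn_ofReal]

lemma Bfn_ofReal_im (E : ℂ → ℂ) (x : ℝ) : (Bfn E x).im = 0 := by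
  simp [Bfn, conjFn_ofReal]

lemma conjFn_eq_neg_of_Afn_eq_zero {E : ℂ → ℂ} {z : ℂ} (hz : Afn E z = 0) :
    conjFn E z = -E z := by
  simp only [Afn, div_eq_zero_iff, two_ne_zero, or_false] at hz
  linear_combination hz

lemma conjFn_eq_of_Bfn_eq_zero {E : ℂ → ℂ} {z : ℂ} (hz : Bfn E z = 0) :
    conjFn E z = E z := by
  simp only [Bfn, div_eq_zero_iff, two_ne_zero, or_false, mul_eq_zero, Complex.I_ne_zero,
    false_or, sub_eq_zero] at hz
  exact hz.symm

/-- if `E` is entire and Hermite–Biehler (`|E*(z)| < |E(z)|` for `Im z > 0`),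
then `A` and `B` are real entire (real-valued on `ℝ`) and all their zeros are real. -/
theorem hermiteBiehler_A_B_real_entire_real_zeros (E : ℂ → ℂ)
    (hE : Differentiable ℂ E)
    (hHB : ∀ z : ℂ, 0 < z.im → ‖conjFn E z‖ < ‖E z‖) :
    Differentiable ℂ (Afn E) ∧ Differentiable ℂ (Bfn E) ∧
    (∀ x : ℝ, (Afn E x).im = 0) ∧ (∀ x : ℝ, (Bfn E x).im = 0) ∧
    (∀ z : ℂ, Afn E z = 0 → z.im = 0) ∧ (∀ z : ℂ, Bfn E z = 0 → z.im = 0) := by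
  refine ⟨(hE.add hE.conjFn).div_const 2, ((hE.sub hE.conjFn).const_mul _).div_const 2,
    Afn_ofReal_im E, Bfn_ofReal_im E, fun z hz => ?_, fun z hz => ?_⟩
  · exact im_eq_zero_of_norm_conjFn_eq hHB (by rw [conjFn_eq_neg_of_Afn_eq_zero hz, norm_neg])
  · exact im_eq_zero_of_norm_conjFn_eq hHB (by rw [conjFn_eq_of_Bfn_eq_zero hz])
end

section
/- Let δ > 0 and let F(z) = cos²(δz/2)/(z² − (π/δ)²). Then F extends to an entire function of exponential type δ, F is real-valued on ℝ, F(x) ≥ 0 for |x| ≥ π/δ, F ∈ L¹(ℝ), and ∫_ℝ F(x) dx = 0. -/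
/-!
Put `a = π/δ`. Since `cos (δz/2) = -sin (δ(z-a)/2) = sin (δ(z+a)/2)`, `F` equals
`-(δ/2)² · sinc (δ(z-a)/2) · sinc (δ(z+a)/2)`, hence is entire. The bound `|cos w| ≤ e^{|w|}`
gives `|F z| ≤ e^{δ|z|}` once `|z² - a²| ≥ 1`, while on the imaginary axis
`|F (iy)| = cosh² (δy/2) / (y² + a²)` grows like `e^{δy}`; so the type is `δ`.
On `ℝ`, `F` is continuous and `O(x⁻²)`, hence integrable, and by partial fractions
`F x = (g (x - a) - g (x + a)) / (2a)` with `g u = sin² (δu/2) / u`. Thus `∫_{-R}^{R} F` is a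
difference of two integrals of `g` over intervals of length `2a` around `±R`, on which
`|g u| ≤ 1/|u|`; both are `O(1/R)`, so `∫ F = 0`.
-/

open MeasureTheory

/-- The exponential type `τ(F) = limsup_{|z|→∞} log|F(z)| / |z|`. -/
noncomputable def expType (F : ℂ → ℂ) : ℝ :=
  Filter.limsup (fun z => Real.log ‖F z‖ / ‖z‖)
    (Filter.comap (fun z : ℂ => ‖z‖) Filter.atTop)

open Filter Topology

theorem Filter.limsup_eq_of_eventually_le_of_frequently_ge {α : Type*} {f : Filter α}
    {u : α → ℝ} {τ : ℝ} (hle : ∀ᶠ x in f, u x ≤ τ) (hge : ∀ ε > 0, ∃ᶠ x in f, τ - ε ≤ u x) :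
    limsup u f = τ := by
  refine le_antisymm (limsup_le_of_le (IsCoboundedUnder.of_frequently_ge (hge 1 one_pos)) hle)
    (le_of_forall_pos_le_add fun ε hε => ?_)
  have := le_limsup_of_frequently_le (hge ε hε) (isBoundedUnder_of_eventually_le hle)
  linarith

namespace Complex

theorem differentiable_dslope_sin : Differentiable ℂ (dslope sin 0) := fun z =>
  ((differentiableOn_dslope univ_mem).mpr differentiable_sin.differentiableOn z
    (Set.mem_univ z)).differentiableAt univ_mem

theorem mul_dslope_sin (w : ℂ) : w * dslope sin 0 w = sin w := by
  simpa using sub_smul_dslope sin 0 w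

theorem dslope_sin_eq_zero {w : ℂ} (hw : w ≠ 0) (h : sin w = 0) : dslope sin 0 w = 0 := by
  simpa [hw, h] using mul_dslope_sin w

theorem norm_cos_le_exp_norm (w : ℂ) : ‖cos w‖ ≤ Real.exp ‖w‖ := by
  have h (v : ℂ) (hv : ‖v‖ = ‖w‖) : ‖exp v‖ ≤ Real.exp ‖w‖ := hv ▸ norm_exp_le_exp_norm v
  rw [cos, norm_div, Complex.norm_two, div_le_iff₀ two_pos]
  calc ‖exp (w * I) + exp (-w * I)‖ ≤ ‖exp (w * I)‖ + ‖exp (-w * I)‖ := norm_add_le _ _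
    _ ≤ Real.exp ‖w‖ + Real.exp ‖w‖ := add_le_add (h _ (by simp)) (h _ (by simp))
    _ = Real.exp ‖w‖ * 2 := by ring

end Complex

theorem intervalIntegral.integral_comp_sub_sub_comp_add {g : ℝ → ℝ} (hg : Continuous g)
    (c d p : ℝ) :
    ∫ x in c..d, (g (x - p) - g (x + p)) =
      (∫ x in (c - p)..(c + p), g x) - ∫ x in (d - p)..(d + p), g x := by
  have hint (s t : ℝ) : IntervalIntegrable g volume s t := hg.intervalIntegrable s t
  have hsub : Continuous fun x => g (x - p) := by fun_prop
  have hadd : Continuous fun x => g (x + p) := by fun_prop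
  rw [intervalIntegral.integral_sub (hsub.intervalIntegrable _ _) (hadd.intervalIntegrable _ _),
    intervalIntegral.integral_comp_sub_right, intervalIntegral.integral_comp_add_right,
    intervalIntegral.integral_interval_sub_interval_comm (hint _ _) (hint _ _) (hint _ _)]

/-- Lean's `x / 0 = 0` gives this the value `0` at `z = ±π/δ`, which is its limit there, so it
is already the entire extension. -/
noncomputable def extremizer (δ : ℝ) (z : ℂ) : ℂ :=
  Complex.cos (δ * z / 2) ^ 2 / (z ^ 2 - ((Real.pi / δ : ℝ) : ℂ) ^ 2)

noncomputable def realExtremizer (δ x : ℝ) : ℝ :=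
  Real.cos (δ * x / 2) ^ 2 / (x ^ 2 - (Real.pi / δ) ^ 2)

noncomputable def sinSqDiv (δ u : ℝ) : ℝ := Real.sin (δ * u / 2) ^ 2 / u

section

variable {δ : ℝ}

open Complex in
theorem extremizer_eq_neg_mul_dslope_sin_mul_dslope_sin (hδ : δ ≠ 0) (z : ℂ) :
    extremizer δ z = -((δ : ℂ) / 2) ^ 2 * dslope sin 0 (δ * (z - ((Real.pi / δ : ℝ) : ℂ)) / 2)
      * dslope sin 0 (δ * (z + ((Real.pi / δ : ℝ) : ℂ)) / 2) := by
  set a : ℂ := ((Real.pi / δ : ℝ) : ℂ)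
  have hδa : (δ : ℂ) * a = Real.pi := by rw [← ofReal_mul, mul_div_cancel₀ _ hδ]
  have hπ : (Real.pi : ℂ) ≠ 0 := ofReal_ne_zero.mpr Real.pi_ne_zero
  by_cases hz : z ^ 2 - a ^ 2 = 0
  · rw [extremizer, hz, div_zero, eq_comm]
    rcases sq_eq_sq_iff_eq_or_eq_neg.mp (sub_eq_zero.mp hz) with rfl | rfl
    · rw [show δ * (a + a) / 2 = (Real.pi : ℂ) by linear_combination hδa,
        dslope_sin_eq_zero hπ sin_pi, mul_zero]
    · rw [show δ * (-a - a) / 2 = -(Real.pi : ℂ) by linear_combination -hδa,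
        dslope_sin_eq_zero (neg_ne_zero.mpr hπ) (by rw [sin_neg, sin_pi, neg_zero]),
        mul_zero, zero_mul]
  · have hu := (mul_dslope_sin _).trans
      (by rw [show δ * (z - a) / 2 = δ * z / 2 - Real.pi / 2 by linear_combination -hδa / 2,
          sin_sub_pi_div_two] : sin (δ * (z - a) / 2) = -cos (δ * z / 2))
    have hv := (mul_dslope_sin _).trans
      (by rw [show δ * (z + a) / 2 = δ * z / 2 + Real.pi / 2 by linear_combination hδa / 2,
          sin_add_pi_div_two] : sin (δ * (z + a) / 2) = cos (δ * z / 2))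
    rw [extremizer, div_eq_iff hz]
    linear_combination (δ * (z + a) / 2 * dslope sin 0 (δ * (z + a) / 2)) * hu
      - cos (δ * z / 2) * hv

theorem differentiable_extremizer (hδ : δ ≠ 0) : Differentiable ℂ (extremizer δ) := by
  rw [funext (extremizer_eq_neg_mul_dslope_sin_mul_dslope_sin hδ)]
  exact ((differentiable_const _).mul (Complex.differentiable_dslope_sin.comp (by fun_prop))).mul
    (Complex.differentiable_dslope_sin.comp (by fun_prop))

open Complex in
theorem norm_extremizer_le_exp (hδ : 0 < δ) {z : ℂ} (hz : Real.pi / δ + 1 ≤ ‖z‖) :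
    ‖extremizer δ z‖ ≤ Real.exp (δ * ‖z‖) := by
  have ha : 0 < Real.pi / δ := div_pos Real.pi_pos hδ
  have hden : 1 ≤ ‖z ^ 2 - ((Real.pi / δ : ℝ) : ℂ) ^ 2‖ := by
    have := norm_sub_norm_le (z ^ 2) (((Real.pi / δ : ℝ) : ℂ) ^ 2)
    rw [norm_pow, norm_pow, norm_real, Real.norm_of_nonneg ha.le] at this
    nlinarith
  have hcos : ‖cos (δ * z / 2)‖ ^ 2 ≤ Real.exp (δ * ‖z‖) := by
    have hw : ‖(δ : ℂ) * z / 2‖ = δ * ‖z‖ / 2 := by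
      rw [norm_div, norm_mul, norm_real, Real.norm_of_nonneg hδ.le, Complex.norm_two]
    calc ‖cos (δ * z / 2)‖ ^ 2 ≤ Real.exp (δ * ‖z‖ / 2) ^ 2 :=
          pow_le_pow_left₀ (norm_nonneg _) (hw ▸ norm_cos_le_exp_norm _) 2
      _ = Real.exp (δ * ‖z‖) := by rw [← Real.exp_nat_mul]; ring_nf
  rw [extremizer, norm_div, norm_pow]
  exact (div_le_self (by positivity) hden).trans hcos

open Complex in
theorem norm_extremizer_mul_I (y : ℝ) :
    ‖extremizer δ (y * I)‖ = Real.cosh (δ * y / 2) ^ 2 / (y ^ 2 + (Real.pi / δ) ^ 2) := by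
  have h : extremizer δ (y * I) =
      ((-(Real.cosh (δ * y / 2) ^ 2 / (y ^ 2 + (Real.pi / δ) ^ 2)) : ℝ) : ℂ) := by
    rw [extremizer, show (δ : ℂ) * (y * I) / 2 = ((δ * y / 2 : ℝ) : ℂ) * I by push_cast; ring,
      cos_mul_I, ← ofReal_cosh, mul_pow, I_sq]
    push_cast
    rw [← div_neg]
    ring_nf
  rw [h, norm_real, Real.norm_eq_abs, abs_neg, abs_of_nonneg (by positivity)]

theorem eventually_exp_le_norm_extremizer_mul_I (hδ : 0 < δ) {ε : ℝ} (hε : 0 < ε) :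
    ∀ᶠ y : ℝ in atTop, Real.exp ((δ - ε) * y) ≤ ‖extremizer δ (y * Complex.I)‖ := by
  filter_upwards [(isLittleO_pow_exp_pos_mul_atTop 2 hε).bound (c := 1 / 8) (by norm_num),
    eventually_ge_atTop (Real.pi / δ)] with y hpoly hy
  have ha : 0 < Real.pi / δ := div_pos Real.pi_pos hδ
  rw [Real.norm_of_nonneg (by positivity), Real.norm_of_nonneg (by positivity)] at hpoly
  have hcosh : Real.exp (δ * y) ≤ 4 * Real.cosh (δ * y / 2) ^ 2 := by
    have : Real.exp (δ * y / 2) ≤ 2 * Real.cosh (δ * y / 2) := by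
      rw [Real.cosh_eq]; linarith [Real.exp_pos (-(δ * y / 2))]
    calc Real.exp (δ * y) = Real.exp (δ * y / 2) ^ 2 := by rw [← Real.exp_nat_mul]; ring_nf
      _ ≤ (2 * Real.cosh (δ * y / 2)) ^ 2 := pow_le_pow_left₀ (Real.exp_pos _).le this 2
      _ = 4 * Real.cosh (δ * y / 2) ^ 2 := by ring
  have hden : 4 * (y ^ 2 + (Real.pi / δ) ^ 2) ≤ Real.exp (ε * y) := by nlinarith
  rw [norm_extremizer_mul_I, le_div_iff₀ (by positivity)]
  calc Real.exp ((δ - ε) * y) * (y ^ 2 + (Real.pi / δ) ^ 2)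
      ≤ Real.exp ((δ - ε) * y) * (Real.exp (ε * y) / 4) := by gcongr; linarith
    _ = Real.exp (δ * y) / 4 := by rw [mul_div_assoc', ← Real.exp_add]; ring_nf
    _ ≤ Real.cosh (δ * y / 2) ^ 2 := by linarith

theorem expType_extremizer (hδ : 0 < δ) : expType (extremizer δ) = δ := by
  have ha : 0 < Real.pi / δ := div_pos Real.pi_pos hδ
  refine limsup_eq_of_eventually_le_of_frequently_ge ?_ fun ε hε => ?_
  · rw [eventually_comap]
    filter_upwards [eventually_ge_atTop (Real.pi / δ + 1)] with r hr z rfl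
    rw [div_le_iff₀ (by linarith)]
    rcases (norm_nonneg (extremizer δ z)).eq_or_lt with h | h
    · rw [← h, Real.log_zero]; positivity
    · exact (Real.log_le_iff_le_exp h).mpr (norm_extremizer_le_exp hδ hr)
  · have hI : Tendsto (fun y : ℝ => (y : ℂ) * Complex.I) atTop (comap norm atTop) :=
      tendsto_comap_iff.mpr (by simpa [Function.comp_def] using tendsto_abs_atTop_atTop)
    refine hI.frequently (Eventually.frequently ?_)
    filter_upwards [eventually_exp_le_norm_extremizer_mul_I hδ hε, eventually_gt_atTop 0]
      with y hy hy0
    rw [show ‖(y : ℂ) * Complex.I‖ = y by simp [abs_of_pos hy0], le_div_iff₀ hy0,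
      Real.le_log_iff_exp_le ((Real.exp_pos _).trans_le hy)]
    exact hy

theorem extremizer_ofReal (δ x : ℝ) : extremizer δ x = realExtremizer δ x := by
  simp only [extremizer, realExtremizer]
  push_cast
  rfl

theorem re_extremizer_ofReal (δ : ℝ) :
    (fun x : ℝ => (extremizer δ x).re) = realExtremizer δ := by
  ext x; rw [extremizer_ofReal, Complex.ofReal_re]

theorem continuous_realExtremizer (hδ : δ ≠ 0) : Continuous (realExtremizer δ) := by
  rw [← re_extremizer_ofReal]
  exact Complex.continuous_re.comp ((differentiable_extremizer hδ).continuous.comp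
    Complex.continuous_ofReal)

theorem realExtremizer_nonneg (hδ : 0 < δ) {x : ℝ} (hx : Real.pi / δ ≤ |x|) :
    0 ≤ realExtremizer δ x := by
  have := pow_le_pow_left₀ (div_pos Real.pi_pos hδ).le hx 2
  rw [sq_abs] at this
  exact div_nonneg (sq_nonneg _) (sub_nonneg.mpr this)

theorem abs_realExtremizer_le (hδ : 0 < δ) {x : ℝ} (hx : 2 * (Real.pi / δ) + 1 ≤ |x|) :
    |realExtremizer δ x| ≤ 4 * (1 + x ^ 2)⁻¹ := by
  have ha : 0 < Real.pi / δ := div_pos Real.pi_pos hδ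
  have hx2 : (2 * (Real.pi / δ) + 1) ^ 2 ≤ x ^ 2 := by
    rw [← sq_abs x]; exact pow_le_pow_left₀ (by positivity) hx 2
  have hden : (1 + x ^ 2) / 4 ≤ x ^ 2 - (Real.pi / δ) ^ 2 := by nlinarith
  have hpos : 0 < x ^ 2 - (Real.pi / δ) ^ 2 := lt_of_lt_of_le (by positivity) hden
  rw [realExtremizer, abs_div, abs_of_nonneg (sq_nonneg _), abs_of_pos hpos]
  calc Real.cos (δ * x / 2) ^ 2 / (x ^ 2 - (Real.pi / δ) ^ 2)
      ≤ 1 / (x ^ 2 - (Real.pi / δ) ^ 2) :=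
        div_le_div_of_nonneg_right (Real.cos_sq_le_one _) hpos.le
    _ ≤ 1 / ((1 + x ^ 2) / 4) := one_div_le_one_div_of_le (by positivity) hden
    _ = 4 * (1 + x ^ 2)⁻¹ := by rw [one_div_div, div_eq_mul_inv]

theorem integrable_realExtremizer (hδ : 0 < δ) : Integrable (realExtremizer δ) := by
  refine (continuous_realExtremizer hδ.ne').locallyIntegrable.integrable_of_isBigO_cocompact
    (Asymptotics.IsBigO.of_bound 4 ?_) (integrable_inv_one_add_sq.integrableAtFilter _)
  filter_upwards [tendsto_norm_cocompact_atTop.eventually_ge_atTop (2 * (Real.pi / δ) + 1)]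
    with x hx
  rw [Real.norm_eq_abs, Real.norm_of_nonneg (by positivity)]
  exact abs_realExtremizer_le hδ hx

theorem sinSqDiv_eq_mul_sinc_sq (δ u : ℝ) :
    sinSqDiv δ u = (δ / 2) ^ 2 * u * Real.sinc (δ * u / 2) ^ 2 := by
  rcases eq_or_ne (δ * u / 2) 0 with h | h
  · obtain rfl | rfl : δ = 0 ∨ u = 0 := by simpa using h
    all_goals simp [sinSqDiv]
  · obtain ⟨hδ, hu⟩ : δ ≠ 0 ∧ u ≠ 0 := by simpa using h
    rw [sinSqDiv, Real.sinc_of_ne_zero h]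
    field_simp

theorem continuous_sinSqDiv (δ : ℝ) : Continuous (sinSqDiv δ) := by
  rw [funext (sinSqDiv_eq_mul_sinc_sq δ)]
  exact (continuous_const.mul continuous_id).mul ((Real.continuous_sinc.comp (by fun_prop)).pow 2)

theorem abs_sinSqDiv_le_inv_abs (δ u : ℝ) : |sinSqDiv δ u| ≤ |u|⁻¹ := by
  rw [sinSqDiv, abs_div, abs_of_nonneg (sq_nonneg _), ← one_div]
  exact div_le_div_of_nonneg_right (Real.sin_sq_le_one _) (abs_nonneg u)

theorem norm_integral_sinSqDiv_le (δ : ℝ) {a c : ℝ} (ha : 0 ≤ a) (hc : a < |c|) :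
    ‖∫ u in (c - a)..(c + a), sinSqDiv δ u‖ ≤ 2 * a / (|c| - a) := by
  have hbound : ∀ u ∈ Set.uIoc (c - a) (c + a), ‖sinSqDiv δ u‖ ≤ (|c| - a)⁻¹ := by
    intro u hu
    rw [Set.uIoc_of_le (by linarith)] at hu
    have : |c| - a ≤ |u| := by
      have : |c - u| ≤ a := abs_sub_le_iff.mpr ⟨by linarith [hu.1], by linarith [hu.2]⟩
      linarith [abs_sub_abs_le_abs_sub c u]
    exact (abs_sinSqDiv_le_inv_abs δ u).trans (inv_anti₀ (by linarith) this)
  refine (intervalIntegral.norm_integral_le_of_norm_le_const hbound).trans_eq ?_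
  rw [show c + a - (c - a) = 2 * a by ring, abs_of_nonneg (by linarith : (0 : ℝ) ≤ 2 * a)]
  ring

theorem realExtremizer_eq_sinSqDiv_sub_sinSqDiv (hδ : 0 < δ) (x : ℝ) :
    realExtremizer δ x =
      (sinSqDiv δ (x - Real.pi / δ) - sinSqDiv δ (x + Real.pi / δ)) / (2 * (Real.pi / δ)) := by
  set a := Real.pi / δ
  have ha : a ≠ 0 := (div_pos Real.pi_pos hδ).ne'
  have hδa : δ * a = Real.pi := mul_div_cancel₀ _ hδ.ne'
  -- both sides are continuous, so it suffices to compare them away from the poles `±a`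
  refine congrFun ((continuous_realExtremizer hδ.ne').ext_on
    ((Set.toFinite {a, -a}).countable.dense_compl ℝ)
    (g := fun x => (sinSqDiv δ (x - a) - sinSqDiv δ (x + a)) / (2 * a))
    (by have := continuous_sinSqDiv δ; fun_prop) fun x hx => ?_) x
  obtain ⟨hxa, hxa'⟩ : x ≠ a ∧ x ≠ -a := by simpa using hx
  have hsub : x - a ≠ 0 := sub_ne_zero.mpr hxa
  have hadd : x + a ≠ 0 := by rwa [← sub_neg_eq_add, sub_ne_zero]
  have hsq : x ^ 2 - a ^ 2 ≠ 0 := by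
    rw [show x ^ 2 - a ^ 2 = (x - a) * (x + a) by ring]; exact mul_ne_zero hsub hadd
  simp only [realExtremizer, sinSqDiv]
  rw [← show a = Real.pi / δ from rfl,
    show δ * (x - a) / 2 = δ * x / 2 - Real.pi / 2 by linear_combination -hδa / 2,
    show δ * (x + a) / 2 = δ * x / 2 + Real.pi / 2 by linear_combination hδa / 2,
    Real.sin_sub_pi_div_two, Real.sin_add_pi_div_two]
  field_simp
  ring

theorem intervalIntegral_realExtremizer_neg_self (hδ : 0 < δ) (R : ℝ) :
    ∫ x in (-R)..R, realExtremizer δ x =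
      ((∫ u in (-R - Real.pi / δ)..(-R + Real.pi / δ), sinSqDiv δ u) -
        ∫ u in (R - Real.pi / δ)..(R + Real.pi / δ), sinSqDiv δ u) / (2 * (Real.pi / δ)) := by
  simp_rw [realExtremizer_eq_sinSqDiv_sub_sinSqDiv hδ]
  rw [intervalIntegral.integral_div,
    intervalIntegral.integral_comp_sub_sub_comp_add (continuous_sinSqDiv δ)]

theorem integral_realExtremizer (hδ : 0 < δ) : ∫ x, realExtremizer δ x = 0 := by
  set a := Real.pi / δ
  have ha : 0 < a := div_pos Real.pi_pos hδ
  have hlim : Tendsto (fun R : ℝ => 2 / (R - a)) atTop (𝓝 0) := by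
    simpa only [sub_eq_add_neg, id] using
      tendsto_const_nhds.div_atTop (tendsto_atTop_add_const_right atTop (-a) tendsto_id)
  refine tendsto_nhds_unique (intervalIntegral_tendsto_integral (integrable_realExtremizer hδ)
    tendsto_neg_atTop_atBot tendsto_id) (squeeze_zero_norm' ?_ hlim)
  filter_upwards [eventually_gt_atTop a] with R hR
  have hR' : |R| = R := abs_of_pos (by linarith)
  have hneg := norm_integral_sinSqDiv_le δ ha.le (c := -R) (by rwa [abs_neg, hR'])
  have hpos := norm_integral_sinSqDiv_le δ ha.le (c := R) (by rwa [hR'])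
  rw [abs_neg, hR'] at hneg
  rw [hR'] at hpos
  rw [id_eq, intervalIntegral_realExtremizer_neg_self hδ, norm_div,
    Real.norm_of_nonneg (by positivity : 0 ≤ 2 * a), div_le_iff₀ (by positivity)]
  calc _ ≤ 2 * a / (R - a) + 2 * a / (R - a) := (norm_sub_le _ _).trans (add_le_add hneg hpos)
    _ = 2 / (R - a) * (2 * a) := by ring

end

/-- `F(z) = cos²(δz/2)/(z² − (π/δ)²)` extends to an entire function of
exponential type `δ`, real-valued on `ℝ`, nonnegative for `|x| ≥ π/δ`, integrable on
`ℝ`, with `∫_ℝ F = 0`. -/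
theorem extremizer_lebesgue (δ : ℝ) (hδ : 0 < δ) :
    ∃ G : ℂ → ℂ, Differentiable ℂ G ∧
      (∀ z : ℂ, z ^ 2 ≠ ((Real.pi / δ : ℝ) : ℂ) ^ 2 →
        G z = Complex.cos (δ * z / 2) ^ 2 / (z ^ 2 - ((Real.pi / δ : ℝ) : ℂ) ^ 2)) ∧
      expType G = δ ∧
      (∀ x : ℝ, (G x).im = 0) ∧
      (∀ x : ℝ, Real.pi / δ ≤ |x| → 0 ≤ (G x).re) ∧
      Integrable (fun x : ℝ => (G x).re) ∧
      ∫ x : ℝ, (G x).re = 0 := by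
  refine ⟨extremizer δ, differentiable_extremizer hδ.ne', fun _ _ => rfl, expType_extremizer hδ,
    fun x => by rw [extremizer_ofReal, Complex.ofReal_im], fun x hx => ?_,
    re_extremizer_ofReal δ ▸ integrable_realExtremizer hδ,
    re_extremizer_ofReal δ ▸ integral_realExtremizer hδ⟩
  rw [extremizer_ofReal, Complex.ofReal_re]
  exact realExtremizer_nonneg hδ hx
end

section
/- Let μ be a locally finite, even, nonnegative Borel measure on ℝ, let δ ≥ 0, and let F : ℝ → ℝ be the restriction of a real entire function of exponential type at most δ, with F ∈ L¹(ℝ, μ), ∫ F dμ ≤ 0, and F eventually nonnegative with last sign change at radius r = r(F). If F is even and has exactly the sign changes 0 < t₁ < ... < tₙ < r on the positive axis, with factorization F(x) = (∏_{k=1}^n (x² − t_k²))(x² − r²)F₁(x) where F₁ is even, real entire of exponential type at most δ, and nonnegative on ℝ, then the function G(z) = (z² − r²)R(z)F₁(z) — where R is the polynomial from the polynomial decomposition ∏(x²−t_k²) = (x²−r²)Q(x)+R(x) with Q, R even and nonnegative on ℝ — satisfies: G is real entire of exponential type at most δ, G ∈ L¹(ℝ,μ), F(x) ≥ G(x) for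 all x ∈ ℝ, ∫ G dμ ≤ 0, and G(x) ≥ 0 exactly for |x| ≥ r. -/
open MeasureTheory Polynomial

/-- `F` has exponential type at most `δ`. -/
def ExpTypeLE (F : ℂ → ℂ) (δ : ℝ) : Prop :=
  ∀ ε > (0 : ℝ), ∃ C : ℝ, ∀ z : ℂ,
    ‖F z‖ ≤ C * Real.exp ((δ + ε) * ‖z‖)

/-- The entire function `G(z) = (z² − r²) R(z) F₁(z)`. -/
noncomputable def Gc (r : ℝ) (R : Polynomial ℝ) (F₁ : ℂ → ℂ) : ℂ → ℂ :=
  fun z => (z ^ 2 - (r : ℂ) ^ 2) * (Polynomial.aeval z) R * F₁ z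

/-- The restriction of `G` to `ℝ`: `G(x) = (x² − r²) R(x) F₁(x)`. -/
noncomputable def Gre (r : ℝ) (R : Polynomial ℝ) (F₁ : ℂ → ℂ) : ℝ → ℝ :=
  fun x => (x ^ 2 - r ^ 2) * R.eval x * (F₁ x).re

/-! Since `Gc` is a polynomial times `F₁`, and a polynomial has exponential type `0`, `Gc`
inherits the type of `F₁`. On the real line, `F − G = (x² − r²)² Q F₁ ≥ 0`, so `G ≤ F`, which
gives `∫ G dμ ≤ ∫ F dμ ≤ 0`; integrability of `G` follows because `0 ≤ G ≤ F` for `|x| ≥ r`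
and `G` is continuous on the compact set `|x| ≤ r`. -/

namespace ExpTypeLE

variable {F G : ℂ → ℂ} {δ δ' : ℝ}

lemma exists_nonneg_bound (hF : ExpTypeLE F δ) {ε : ℝ} (hε : 0 < ε) :
    ∃ C : ℝ, 0 ≤ C ∧ ∀ z : ℂ, ‖F z‖ ≤ C * Real.exp ((δ + ε) * ‖z‖) := by
  obtain ⟨C, hC⟩ := hF ε hε
  exact ⟨C, nonneg_of_mul_nonneg_left ((norm_nonneg _).trans (hC 0)) (Real.exp_pos _), hC⟩

lemma add (hF : ExpTypeLE F δ) (hG : ExpTypeLE G δ) : ExpTypeLE (F + G) δ := by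
  intro ε hε
  obtain ⟨C₁, hC₁⟩ := hF ε hε
  obtain ⟨C₂, hC₂⟩ := hG ε hε
  refine ⟨C₁ + C₂, fun z => ?_⟩
  calc ‖F z + G z‖ ≤ ‖F z‖ + ‖G z‖ := norm_add_le _ _
    _ ≤ _ := by rw [add_mul]; exact add_le_add (hC₁ z) (hC₂ z)

lemma mul (hF : ExpTypeLE F δ) (hG : ExpTypeLE G δ') : ExpTypeLE (F * G) (δ + δ') := by
  intro ε hε
  obtain ⟨C₁, hC₁0, hC₁⟩ := hF.exists_nonneg_bound (half_pos hε)
  obtain ⟨C₂, hC₂⟩ := hG (ε / 2) (half_pos hε)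
  refine ⟨C₁ * C₂, fun z => ?_⟩
  calc ‖F z * G z‖ = ‖F z‖ * ‖G z‖ := norm_mul _ _
    _ ≤ C₁ * Real.exp ((δ + ε / 2) * ‖z‖) * (C₂ * Real.exp ((δ' + ε / 2) * ‖z‖)) :=
        mul_le_mul (hC₁ z) (hC₂ z) (norm_nonneg _) (by positivity)
    _ = C₁ * C₂ * Real.exp ((δ + δ' + ε) * ‖z‖) := by
        rw [mul_mul_mul_comm, ← Real.exp_add]; ring_nf

lemma const_mul (c : ℂ) (hF : ExpTypeLE F δ) : ExpTypeLE (fun z => c * F z) δ := by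
  intro ε hε
  obtain ⟨C, hC⟩ := hF ε hε
  refine ⟨‖c‖ * C, fun z => ?_⟩
  rw [norm_mul, mul_assoc]
  exact mul_le_mul_of_nonneg_left (hC z) (norm_nonneg c)

end ExpTypeLE

lemma expTypeLE_pow (n : ℕ) : ExpTypeLE (fun z => z ^ n) 0 := by
  intro ε hε
  refine ⟨n.factorial / ε ^ n, fun z => ?_⟩
  have h := Real.pow_div_factorial_le_exp (ε * ‖z‖) (by positivity) n
  rw [mul_pow, div_le_iff₀ (by positivity)] at h
  rw [norm_pow, zero_add, div_mul_eq_mul_div, le_div_iff₀ (by positivity)]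
  linarith

lemma expTypeLE_aeval {𝕜 : Type*} [NormedField 𝕜] [NormedAlgebra 𝕜 ℂ] (p : 𝕜[X]) :
    ExpTypeLE (fun z => aeval z p) 0 := by
  induction p using Polynomial.induction_on' with
  | add p q hp hq => simp only [map_add]; exact hp.add hq
  | monomial n a => simpa only [aeval_monomial] using (expTypeLE_pow n).const_mul _

lemma Gc_eq_aeval_mul (r : ℝ) (R : ℝ[X]) (F₁ : ℂ → ℂ) :
    Gc r R F₁ = (fun z => aeval z ((X ^ 2 - C (r ^ 2)) * R)) * F₁ := by
  ext z
  simp [Gc]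

lemma Gc_ofReal {F₁ : ℂ → ℂ} (hF₁real : ∀ x : ℝ, (F₁ x).im = 0) (r : ℝ) (R : ℝ[X]) (x : ℝ) :
    Gc r R F₁ x = Gre r R F₁ x := by
  have hF₁x : F₁ x = ((F₁ x).re : ℂ) := Complex.ext (by simp) (by simp [hF₁real x])
  have hRx : aeval (x : ℂ) R = ((R.eval x : ℝ) : ℂ) := (ofReal_eval R x).symm
  rw [Gc, Gre, hF₁x, hRx]
  push_cast
  simp

section RealLine

variable {r : ℝ} {R : ℝ[X]} {F₁ : ℂ → ℂ} {x : ℝ}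

lemma Gre_le_mul_of_eq_mul_add {p : ℝ} {Q : ℝ[X]} (hQ : 0 ≤ Q.eval x) (hF₁ : 0 ≤ (F₁ x).re)
    (hp : p = (x ^ 2 - r ^ 2) * Q.eval x + R.eval x) :
    Gre r R F₁ x ≤ p * (x ^ 2 - r ^ 2) * (F₁ x).re := by
  have hdiff : p * (x ^ 2 - r ^ 2) * (F₁ x).re - Gre r R F₁ x
      = (x ^ 2 - r ^ 2) ^ 2 * Q.eval x * (F₁ x).re := by
    rw [hp, Gre]; ring
  have := mul_nonneg (mul_nonneg (sq_nonneg (x ^ 2 - r ^ 2)) hQ) hF₁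
  linarith

lemma Gre_nonneg_of_le_abs (hr : 0 ≤ r) (hR : 0 ≤ R.eval x) (hF₁ : 0 ≤ (F₁ x).re)
    (hx : r ≤ |x|) :
    0 ≤ Gre r R F₁ x := by
  have : r ^ 2 ≤ x ^ 2 := by nlinarith [abs_nonneg x, sq_abs x]
  exact mul_nonneg (mul_nonneg (by linarith) hR) hF₁

lemma Gre_nonpos_of_abs_le (hR : 0 ≤ R.eval x) (hF₁ : 0 ≤ (F₁ x).re) (hx : |x| ≤ r) :
    Gre r R F₁ x ≤ 0 := by
  have : x ^ 2 ≤ r ^ 2 := by nlinarith [abs_nonneg x, sq_abs x]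
  rw [Gre, mul_assoc]
  exact mul_nonpos_of_nonpos_of_nonneg (by linarith) (mul_nonneg hR hF₁)

end RealLine

lemma MeasureTheory.Integrable.of_continuous_of_norm_le_off_compact {X E F : Type*}
    [TopologicalSpace X] [T2Space X] [MeasurableSpace X] [OpensMeasurableSpace X]
    [NormedAddCommGroup E] [NormedAddCommGroup F] [SecondCountableTopologyEither X E]
    {μ : Measure X} [IsLocallyFiniteMeasure μ] {f : X → F} {g : X → E} {K : Set X}
    (hf : Integrable f μ) (hg : Continuous g) (hK : IsCompact K)
    (hgf : ∀ x ∉ K, ‖g x‖ ≤ ‖f x‖) : Integrable g μ := by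
  have hgK : IntegrableOn g K μ := hg.continuousOn.integrableOn_compact hK
  have hgKc : IntegrableOn g Kᶜ μ :=
    Integrable.mono hf.integrableOn hg.aestronglyMeasurable.restrict
      ((ae_restrict_iff' hK.measurableSet.compl).2 (ae_of_all _ hgf))
  simpa using hgK.union hgKc

theorem reduction_to_one_sign_change_general (μ : Measure ℝ) [IsLocallyFiniteMeasure μ] (δ : ℝ)
    (Fc F₁ : ℂ → ℂ) (hF₁ : Differentiable ℂ F₁) (hF₁type : ExpTypeLE F₁ δ)
    (hF₁real : ∀ x : ℝ, (F₁ x).im = 0) (hF₁pos : ∀ x : ℝ, 0 ≤ (F₁ x).re)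
    (hFint : Integrable (fun x : ℝ => (Fc x).re) μ)
    (hFneg : ∫ x, (Fc x).re ∂μ ≤ 0)
    (n : ℕ) (t : Fin n → ℝ) (r : ℝ) (hr : 0 < r)
    (hfac : ∀ x : ℝ, (Fc x).re = (∏ k, (x ^ 2 - t k ^ 2)) * (x ^ 2 - r ^ 2) * (F₁ x).re)
    (Q R : Polynomial ℝ)
    (hQ0 : ∀ x : ℝ, 0 ≤ Q.eval x) (hR0 : ∀ x : ℝ, 0 ≤ R.eval x)
    (hQR : ∀ x : ℝ, (∏ k, (x ^ 2 - t k ^ 2)) = (x ^ 2 - r ^ 2) * Q.eval x + R.eval x) :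
    Differentiable ℂ (Gc r R F₁) ∧ ExpTypeLE (Gc r R F₁) δ ∧
    (∀ x : ℝ, (Gc r R F₁ x).im = 0 ∧ (Gc r R F₁ x).re = Gre r R F₁ x) ∧
    Integrable (Gre r R F₁) μ ∧
    (∀ x : ℝ, Gre r R F₁ x ≤ (Fc x).re) ∧
    (∫ x, Gre r R F₁ x ∂μ) ≤ 0 ∧
    (∀ x : ℝ, r ≤ |x| → 0 ≤ Gre r R F₁ x) ∧
    (∀ x : ℝ, |x| ≤ r → Gre r R F₁ x ≤ 0) := by
  have hGpos x (hx : r ≤ |x|) : 0 ≤ Gre r R F₁ x :=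
    Gre_nonneg_of_le_abs hr.le (hR0 x) (hF₁pos x) hx
  have hle x : Gre r R F₁ x ≤ (Fc x).re := by
    rw [hfac]; exact Gre_le_mul_of_eq_mul_add (hQ0 x) (hF₁pos x) (hQR x)
  have hGcont : Continuous (Gre r R F₁) := by
    have := hF₁.continuous
    unfold Gre; fun_prop
  have hGint : Integrable (Gre r R F₁) μ := by
    refine hFint.of_continuous_of_norm_le_off_compact hGcont (isCompact_closedBall 0 r)
      fun x hx => ?_
    have hx : r ≤ |x| := by
      simp only [Metric.mem_closedBall, Real.dist_eq, sub_zero, not_le] at hx; exact hx.le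
    simpa only [Real.norm_eq_abs, abs_of_nonneg (hGpos x hx)] using (hle x).trans (le_abs_self _)
  refine ⟨?_, ?_, fun x => ?_, hGint, hle, (integral_mono hGint hFint hle).trans hFneg, hGpos,
    fun x hx => Gre_nonpos_of_abs_le (hR0 x) (hF₁pos x) hx⟩
  · rw [Gc_eq_aeval_mul]; exact (Polynomial.differentiable_aeval _).mul hF₁
  · simpa only [Gc_eq_aeval_mul, zero_add] using (expTypeLE_aeval _).mul hF₁type
  · rw [Gc_ofReal hF₁real]; exact ⟨Complex.ofReal_im _, Complex.ofReal_re _⟩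

/-- reduction to one sign change.  Given `F` in the class `𝓔(μ;δ)`, even,
with sign changes `0 < t₁ < … < tₙ < r` and factorization
`F(x) = (∏ (x²−t_k²))(x²−r²)F₁(x)`, and the polynomial decomposition
`∏(x²−t_k²) = (x²−r²)Q(x)+R(x)` with `Q, R` even, nonnegative, `deg R ≤ 2n`, the
function `G(z) = (z²−r²)R(z)F₁(z)` is real entire of exponential type at most `δ`,
belongs to `L¹(μ)`, satisfies `G ≤ F` on `ℝ`, `∫ G dμ ≤ 0`, and `G ≥ 0` exactly for
`|x| ≥ r`. -/
theorem reduction_to_one_sign_change (μ : Measure ℝ) [IsLocallyFiniteMeasure μ]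
    (heven : μ.map (fun x => -x) = μ) (δ : ℝ) (hδ : 0 ≤ δ)
    (Fc F₁ : ℂ → ℂ) (hFc : Differentiable ℂ Fc) (hF₁ : Differentiable ℂ F₁)
    (hFtype : ExpTypeLE Fc δ) (hF₁type : ExpTypeLE F₁ δ)
    (hFreal : ∀ x : ℝ, (Fc x).im = 0) (hF₁real : ∀ x : ℝ, (F₁ x).im = 0)
    (hFeven : ∀ z : ℂ, Fc (-z) = Fc z) (hF₁even : ∀ z : ℂ, F₁ (-z) = F₁ z)
    (hF₁pos : ∀ x : ℝ, 0 ≤ (F₁ x).re)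
    (hFint : Integrable (fun x : ℝ => (Fc x).re) μ)
    (hFneg : ∫ x, (Fc x).re ∂μ ≤ 0)
    (n : ℕ) (hn : 1 ≤ n) (t : Fin n → ℝ) (r : ℝ)
    (ht0 : ∀ k, 0 < t k) (htmono : StrictMono t) (htr : ∀ k, t k < r) (hr : 0 < r)
    (hlast : ∀ x : ℝ, r ≤ |x| → 0 ≤ (Fc x).re)
    (hfac : ∀ x : ℝ, (Fc x).re = (∏ k, (x ^ 2 - t k ^ 2)) * (x ^ 2 - r ^ 2) * (F₁ x).re)
    (Q R : Polynomial ℝ)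
    (hQeven : ∀ x : ℝ, Q.eval (-x) = Q.eval x) (hReven : ∀ x : ℝ, R.eval (-x) = R.eval x)
    (hQ0 : ∀ x : ℝ, 0 ≤ Q.eval x) (hR0 : ∀ x : ℝ, 0 ≤ R.eval x)
    (hQR : ∀ x : ℝ, (∏ k, (x ^ 2 - t k ^ 2)) = (x ^ 2 - r ^ 2) * Q.eval x + R.eval x)
    (hRdeg : R.natDegree ≤ 2 * n) :
    Differentiable ℂ (Gc r R F₁) ∧ ExpTypeLE (Gc r R F₁) δ ∧
    (∀ x : ℝ, (Gc r R F₁ x).im = 0 ∧ (Gc r R F₁ x).re = Gre r R F₁ x) ∧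
    Integrable (Gre r R F₁) μ ∧
    (∀ x : ℝ, Gre r R F₁ x ≤ (Fc x).re) ∧
    (∫ x, Gre r R F₁ x ∂μ) ≤ 0 ∧
    (∀ x : ℝ, r ≤ |x| → 0 ≤ Gre r R F₁ x) ∧
    (∀ x : ℝ, |x| ≤ r → Gre r R F₁ x ≤ 0) :=
  reduction_to_one_sign_change_general μ δ Fc F₁ hF₁ hF₁type hF₁real hF₁pos hFint hFneg n t r hr
    hfac Q R hQ0 hR0 hQR
end
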